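/- Cluster consistification for non-well-fitting rules: let R be a system and let C be a rule assigning to each connection R_q a (possibly empty, possibly non-singleton) set of couplings of its marginals. Define R to be C-noncontextual if there is an overall coupling S of R such that for every q, the law of S on connection q belongs to C[R_q]. Then R is C-noncontextual if and only if some member of the cluster {R‡_i}, obtained by filling each auxiliary bunch (q,·) with some element of C[R_q] (one choice function i over all q), is traditionally noncontextual. In particular, if C[R_q] = ∅ for some q, then R is C-contextual and the cluster is empty. -/
import Mathlib


open scoped ENNReal

/-- Contents of the consistified format: pairs `(q,c)` with `q ≺ c`. -/
def ConsContent {Q C : Type} (rel : Q → C → Prop) := {p : Q × C // rel p.1 p.2}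

instance {Q C : Type} [Fintype Q] [Fintype C] (rel : Q → C → Prop)
    [∀ q c, Decidable (rel q c)] : Fintype (ConsContent rel) :=
  inferInstanceAs (Fintype {p : Q × C // rel p.1 p.2})

/-- The relation of the consistified format: `(q,c) ≺‡ (·,c')` iff `c = c'`,
`(q,c) ≺‡ (q',·)` iff `q = q'`.  Main contexts are `Sum.inl c`, auxiliary
contexts are `Sum.inr q`. -/
def consRel {Q C : Type} (rel : Q → C → Prop) :
    ConsContent rel → (C ⊕ Q) → Prop :=
  fun p => Sum.elim (fun c => p.1.2 = c) (fun q => p.1.1 = q)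

instance {Q C : Type} [DecidableEq Q] [DecidableEq C] (rel : Q → C → Prop) :
    ∀ (p : ConsContent rel) (c' : C ⊕ Q), Decidable (consRel rel p c')
  | p, Sum.inl c => inferInstanceAs (Decidable (p.1.2 = c))
  | p, Sum.inr q => inferInstanceAs (Decidable (p.1.1 = q))

/-- The marginal distribution of content `q` in the bunch of context `c`
(a member of the connection of `q`). -/
noncomputable def connMarg {Q C A : Type} (rel : Q → C → Prop)
    (bunch : ∀ c : C, PMF ({q : Q // rel q c} → A))
    (q : Q) (c : {c : C // rel q c}) : PMF A :=
  (bunch c.1).map (fun f => f ⟨q, c.2⟩)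

/-- A well-fitting connection-coupling rule: to every family of one-dimensional
distributions it assigns a *unique* joint distribution (a coupling of the family),
which is the identity coupling whenever all members of the family coincide. -/
structure WellFittingRule (A : Type) : Type 1 where
  rule : ∀ (ι : Type) [Fintype ι], (ι → PMF A) → PMF (ι → A)
  marg : ∀ (ι : Type) [Fintype ι] (ν : ι → PMF A) (i : ι),
    (rule ι ν).map (fun g => g i) = ν i
  ident : ∀ (ι : Type) [Fintype ι] (ν : ι → PMF A), (∀ i j, ν i = ν j) →
    ∀ g ∈ (rule ι ν).support, ∀ i j : ι, g i = g j

/-- `S` is an overall coupling of the system `(rel, bunch)`: a joint distribution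
whose restriction to each context `c` is distributed as the bunch of `c`. -/
def BunchMatch {Q C A : Type} (rel : Q → C → Prop)
    (bunch : ∀ c : C, PMF ({q : Q // rel q c} → A))
    (S : PMF (ConsContent rel → A)) : Prop :=
  ∀ c : C, S.map (fun f (q : {q : Q // rel q c}) => f ⟨(q.1, c), q.2⟩) = bunch c

/-- Consistent connectedness: variables sharing a content are identically
distributed across contexts. -/
def ConsistentlyConnected {Q C A : Type} (rel : Q → C → Prop)
    (bunch : ∀ c : C, PMF ({q : Q // rel q c} → A)) : Prop :=
  ∀ (q : Q) (c c' : C) (h : rel q c) (h' : rel q c'),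
    (bunch c).map (fun f => f ⟨q, h⟩) = (bunch c').map (fun f => f ⟨q, h'⟩)

/-- Traditional noncontextuality: some overall coupling makes every connection
an identity coupling (its coordinates are almost surely equal). -/
def TradNoncontextual {Q C A : Type} (rel : Q → C → Prop)
    (bunch : ∀ c : C, PMF ({q : Q // rel q c} → A)) : Prop :=
  ∃ S : PMF (ConsContent rel → A), BunchMatch rel bunch S ∧
    ∀ f ∈ S.support, ∀ (q : Q) (c c' : C) (h : rel q c) (h' : rel q c'),
      f ⟨(q, c), h⟩ = f ⟨(q, c'), h'⟩

/-- `C`-noncontextuality: some overall coupling induces on every connection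
exactly the coupling prescribed by the rule `W`. -/
def CNoncontextual {Q C A : Type} [Fintype C] (rel : Q → C → Prop)
    [∀ q c, Decidable (rel q c)]
    (bunch : ∀ c : C, PMF ({q : Q // rel q c} → A))
    (W : WellFittingRule A) : Prop :=
  ∃ S : PMF (ConsContent rel → A), BunchMatch rel bunch S ∧
    ∀ q : Q, S.map (fun f (c : {c : C // rel q c}) => f ⟨(q, c.1), c.2⟩) =
      W.rule {c : C // rel q c} (connMarg rel bunch q)

/-- The bunches of the consistification `R‡`: main bunches `(·,c)` are the
bunches of `R` (with contents relabeled), auxiliary bunches `(q,·)` are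
distributed as `C[R_q]`. -/
noncomputable def consBunch {Q C A : Type} [Fintype C] (rel : Q → C → Prop)
    [∀ q c, Decidable (rel q c)]
    (bunch : ∀ c : C, PMF ({q : Q // rel q c} → A))
    (W : WellFittingRule A) :
    ∀ c' : C ⊕ Q, PMF ({p : ConsContent rel // consRel rel p c'} → A)
  | Sum.inl c => (bunch c).map (fun f p =>
      f ⟨p.1.1.1, Eq.mp (congrArg (rel p.1.1.1) (p.2 : p.1.1.2 = c)) p.1.2⟩)
  | Sum.inr q => (W.rule {c : C // rel q c} (connMarg rel bunch q)).map (fun g p =>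
      g ⟨p.1.1.2, Eq.mp (congrArg (fun q' => rel q' p.1.1.2) (p.2 : p.1.1.1 = q)) p.1.2⟩)

/-- The consistification of a system with the auxiliary bunch `(q,·)` filled
with a prescribed coupling `aux q` of the connection of `q`. -/
noncomputable def consBunchWith {Q C A : Type} (rel : Q → C → Prop)
    (bunch : ∀ c : C, PMF ({q : Q // rel q c} → A))
    (aux : ∀ q : Q, PMF ({c : C // rel q c} → A)) :
    ∀ c' : C ⊕ Q, PMF ({p : ConsContent rel // consRel rel p c'} → A)
  | Sum.inl c => (bunch c).map (fun f p =>
      f ⟨p.1.1.1, Eq.mp (congrArg (rel p.1.1.1) (p.2 : p.1.1.2 = c)) p.1.2⟩)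
  | Sum.inr q => (aux q).map (fun g p =>
      g ⟨p.1.1.2, Eq.mp (congrArg (fun q' => rel q' p.1.1.2) (p.2 : p.1.1.1 = q)) p.1.2⟩)

private lemma pmf_map_congr {α β : Type*} (p : PMF α) {f g : α → β}
    (h : ∀ a ∈ p.support, f a = g a) : p.map f = p.map g := by
  ext b
  simp only [PMF.map_apply]
  refine tsum_congr fun a => ?_
  by_cases ha : a ∈ p.support
  · rw [h a ha]
  · have hz : p a = 0 := by simpa [PMF.mem_support_iff] using ha
    simp [hz]

/-- Cluster consistification for a (possibly empty- or multi-valued)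
connection-coupling rule: `R` is `C`-noncontextual iff some member of the
cluster of consistifications (one per choice function through the sets
`Crule q`) is traditionally noncontextual; in particular, if some `Crule q`
is empty then `R` is `C`-contextual and the cluster is empty. -/
theorem cluster_consistification
    {Q C A : Type} [Fintype Q] [Fintype C] [Fintype A]
    [DecidableEq Q] [DecidableEq C]
    (rel : Q → C → Prop) [∀ q c, Decidable (rel q c)]
    (bunch : ∀ c : C, PMF ({q : Q // rel q c} → A))
    (Crule : ∀ q : Q, Set (PMF ({c : C // rel q c} → A)))
    (hCrule : ∀ q : Q, ∀ γ ∈ Crule q, ∀ c : {c : C // rel q c},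
      γ.map (fun g => g c) = connMarg rel bunch q c) :
    ((∃ S : PMF (ConsContent rel → A), BunchMatch rel bunch S ∧
        ∀ q : Q,
          S.map (fun f (c : {c : C // rel q c}) => f ⟨(q, c.1), c.2⟩) ∈ Crule q) ↔
      (∃ i : ∀ q : Q, Crule q,
        TradNoncontextual (consRel rel)
          (consBunchWith rel bunch (fun q => (i q).1)))) ∧
    ((∃ q : Q, Crule q = ∅) →
      ¬ (∃ S : PMF (ConsContent rel → A), BunchMatch rel bunch S ∧
          ∀ q : Q,
            S.map (fun f (c : {c : C // rel q c}) => f ⟨(q, c.1), c.2⟩) ∈ Crule q) ∧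
      IsEmpty (∀ q : Q, Crule q)) := by
  constructor
  · constructor
    · rintro ⟨S, hS, hconn⟩
      refine ⟨fun q => ⟨_, hconn q⟩, ?_⟩
      refine ⟨S.map (fun f p' => f p'.1.1), ?_, ?_⟩
      · intro c'
        rw [PMF.map_comp]
        cases c' with
        | inl c =>
          show _ = consBunchWith rel bunch _ (Sum.inl c)
          simp only [consBunchWith]
          rw [← hS c, PMF.map_comp]
          refine congrArg (fun φ => PMF.map φ S) (funext fun f => funext fun x => ?_)
          obtain ⟨⟨⟨q0, c0⟩, hr⟩, hc⟩ := x
          have hc' : c0 = c := hc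
          subst hc'
          rfl
        | inr q =>
          show _ = consBunchWith rel bunch _ (Sum.inr q)
          simp only [consBunchWith]
          rw [PMF.map_comp]
          refine congrArg (fun φ => PMF.map φ S) (funext fun f => funext fun x => ?_)
          obtain ⟨⟨⟨q0, c0⟩, hr⟩, hc⟩ := x
          have hc' : q0 = q := hc
          subst hc'
          rfl
      · intro g hg p c c' h h'
        rw [PMF.support_map] at hg
        obtain ⟨f, -, rfl⟩ := hg
        rfl
    · rintro ⟨i, T, hT, hid⟩
      refine ⟨T.map (fun g (p : ConsContent rel) =>
          g ⟨(p, Sum.inl p.1.2), rfl⟩), ?_, ?_⟩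
      · intro c
        rw [PMF.map_comp]
        have h1 := hT (Sum.inl c)
        simp only [consBunchWith] at h1
        have h2 := congrArg (PMF.map (fun (h : {p : ConsContent rel // consRel rel p (Sum.inl c)} → A)
          (q : {q : Q // rel q c}) => h ⟨⟨(q.1, c), q.2⟩, rfl⟩)) h1
        rw [PMF.map_comp, PMF.map_comp] at h2
        have h3 : ((fun (h : {p : ConsContent rel // consRel rel p (Sum.inl c)} → A)
            (q : {q : Q // rel q c}) => h ⟨⟨(q.1, c), q.2⟩, rfl⟩) ∘
            (fun (f : {q : Q // rel q c} → A) (p : {p : ConsContent rel // consRel rel p (Sum.inl c)}) =>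
              f ⟨p.1.1.1, Eq.mp (congrArg (rel p.1.1.1) (p.2 : p.1.1.2 = c)) p.1.2⟩)) = id := by
          funext f
          rfl
        rw [h3, PMF.map_id] at h2
        exact h2
      · intro q
        rw [PMF.map_comp]
        have h1 := hT (Sum.inr q)
        simp only [consBunchWith] at h1
        have h2 := congrArg (PMF.map (fun (h : {p : ConsContent rel // consRel rel p (Sum.inr q)} → A)
          (c : {c : C // rel q c}) => h ⟨⟨(q, c.1), c.2⟩, rfl⟩)) h1
        rw [PMF.map_comp, PMF.map_comp] at h2
        have h3 : ((fun (h : {p : ConsContent rel // consRel rel p (Sum.inr q)} → A)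
            (c : {c : C // rel q c}) => h ⟨⟨(q, c.1), c.2⟩, rfl⟩) ∘
            (fun (g : {c : C // rel q c} → A) (p : {p : ConsContent rel // consRel rel p (Sum.inr q)}) =>
              g ⟨p.1.1.2, Eq.mp (congrArg (fun q' => rel q' p.1.1.2) (p.2 : p.1.1.1 = q)) p.1.2⟩)) = id := by
          funext g
          rfl
        rw [h3, PMF.map_id] at h2
        have h4 : T.map ((fun f (c : {c : C // rel q c}) => f ⟨(q, c.1), c.2⟩) ∘
            (fun g (p : ConsContent rel) => g ⟨(p, Sum.inl p.1.2), rfl⟩)) = (i q).1 := by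
          have hcg := pmf_map_congr T
            (f := (fun (f : ConsContent rel → A) (c : {c : C // rel q c}) => f ⟨(q, c.1), c.2⟩) ∘
              (fun g (p : ConsContent rel) => g ⟨(p, Sum.inl p.1.2), rfl⟩))
            (g := fun g (c : {c : C // rel q c}) => g ⟨(⟨(q, c.1), c.2⟩, Sum.inr q), rfl⟩)
            (fun g hg => funext fun c =>
              hid g hg ⟨(q, c.1), c.2⟩ (Sum.inl c.1) (Sum.inr q) rfl rfl)
          rw [hcg]
          exact h2
        rw [h4]
        exact (i q).2
  · rintro ⟨q, hq⟩
    constructor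
    · rintro ⟨S, -, hconn⟩
      exact absurd (hconn q) (by simp [hq])
    · exact ⟨fun i => absurd (i q).2 (by simp [hq])⟩
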